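/- arXiv:1005.3790 — 4 statements merged into one kernel-verified Lean document; each statement's English description precedes it below -/
import Mathlib

section
/- Let c > 0, t ≥ 1 an integer, and z > 1/c. Then the function z ↦ c^t · (Γ(t + 1/2)/Γ(t + 1)) · [ √(c·z − 1) · ∑_{l=0}^{t−1} (Γ(l+1)/Γ(3/2 + l)) · (c·z)^{−(l+1)} + (2/√π) · arctan √(c·z − 1) ] is an antiderivative of z ↦ 1/(z^{t+1} √(c·z − 1)) on (1/c, ∞). -/
open Real Finset

/-!
After the substitution `u = c z` it suffices to treat `c = 1`. Writing
`b l = Γ(l + 1) / Γ(l + 1/2)`, the functional equation of `Γ` shows that the derivative of the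
`l`-th summand `√(u - 1) Γ(l + 1) / (Γ(l + 3/2) u^(l+1))` is
`(b (l + 1) / u^(l+2) - b l / u^(l+1)) / √(u - 1)`, so the sum telescopes to
`(b t / u^(t+1) - b 0 / u) / √(u - 1)`; the arctangent term, with `b 0 = 1 / √π`, cancels
the boundary term `b 0 / u`.
-/

noncomputable def gammaHalfRatio (l : ℕ) : ℝ := Gamma ((l : ℝ) + 1) / Gamma ((l : ℝ) + 1 / 2)

lemma Gamma_three_halves_add {x : ℝ} (hx : x + 1 / 2 ≠ 0) :
    Gamma (3 / 2 + x) = (x + 1 / 2) * Gamma (x + 1 / 2) := by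
  rw [← Gamma_add_one hx]
  ring_nf

lemma succ_mul_Gamma_div_Gamma_three_halves_add (l : ℕ) :
    ((l : ℝ) + 1) * (Gamma ((l : ℝ) + 1) / Gamma (3 / 2 + l)) = gammaHalfRatio (l + 1) := by
  have h : Gamma ((l : ℝ) + 1 + 1) = ((l : ℝ) + 1) * Gamma ((l : ℝ) + 1) :=
    Gamma_add_one (by positivity)
  rw [gammaHalfRatio, Nat.cast_succ, h]
  ring_nf

lemma half_add_mul_Gamma_div_Gamma_three_halves_add (l : ℕ) :
    ((l : ℝ) + 1 / 2) * (Gamma ((l : ℝ) + 1) / Gamma (3 / 2 + l)) = gammaHalfRatio l := by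
  have hl : ((l : ℝ) + 1 / 2) ≠ 0 := by positivity
  rw [gammaHalfRatio, Gamma_three_halves_add hl]
  field_simp

lemma gammaHalfRatio_zero : gammaHalfRatio 0 = 1 / √π := by
  simp [gammaHalfRatio, ← Gamma_one_half_eq]

lemma hasDerivAt_sqrt_sub_one_div_pow (n : ℕ) {u : ℝ} (hu : 1 < u) :
    HasDerivAt (fun v => √(v - 1) / v ^ (n + 1))
      ((2 * (n + 1) - (2 * n + 1) * u) / (2 * √(u - 1) * u ^ (n + 2))) u := by
  have hs : 0 < √(u - 1) := sqrt_pos.mpr (by linarith)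
  have hsq : √(u - 1) ^ 2 = u - 1 := sq_sqrt (by linarith)
  have h := (((hasDerivAt_id' u).sub_const 1).sqrt (by linarith)).fun_div
    ((hasDerivAt_id' u).fun_pow (n + 1)) (pow_ne_zero _ (by linarith))
  refine h.congr_deriv ?_
  field_simp
  rw [hsq]
  push_cast
  ring

lemma hasDerivAt_arctan_sqrt_sub_one {u : ℝ} (hu : 1 < u) :
    HasDerivAt (fun v => arctan √(v - 1)) (1 / (2 * u * √(u - 1))) u := by
  have hs : 0 < √(u - 1) := sqrt_pos.mpr (by linarith)
  have h := (((hasDerivAt_id' u).sub_const 1).sqrt (by linarith)).arctan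
  refine h.congr_deriv ?_
  rw [sq_sqrt (by linarith), add_sub_cancel]
  field_simp

lemma hasDerivAt_sqrt_sub_one_mul_Gamma_div_pow (l : ℕ) {u : ℝ} (hu : 1 < u) :
    HasDerivAt (fun v => √(v - 1) * (Gamma ((l : ℝ) + 1) / Gamma (3 / 2 + l) / v ^ (l + 1)))
      ((gammaHalfRatio (l + 1) / u ^ (l + 2) - gammaHalfRatio l / u ^ (l + 1)) / √(u - 1)) u := by
  have hs : 0 < √(u - 1) := sqrt_pos.mpr (by linarith)
  have hu0 : u ≠ 0 := by positivity
  rw [← succ_mul_Gamma_div_Gamma_three_halves_add, ← half_add_mul_Gamma_div_Gamma_three_halves_add]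
  set a := Gamma ((l : ℝ) + 1) / Gamma (3 / 2 + l)
  have hf : (fun v => √(v - 1) * (a / v ^ (l + 1))) = fun v => a * (√(v - 1) / v ^ (l + 1)) := by
    funext v
    ring
  rw [hf]
  refine ((hasDerivAt_sqrt_sub_one_div_pow l hu).const_mul a).congr_deriv ?_
  field_simp
  ring

noncomputable def antiderivPowSqrt (t : ℕ) (u : ℝ) : ℝ :=
  √(u - 1) * ∑ l ∈ range t, Gamma ((l : ℝ) + 1) / Gamma (3 / 2 + l) / u ^ (l + 1) +
    2 / √π * arctan √(u - 1)

lemma hasDerivAt_antiderivPowSqrt (t : ℕ) {u : ℝ} (hu : 1 < u) :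
    HasDerivAt (antiderivPowSqrt t) (gammaHalfRatio t / (u ^ (t + 1) * √(u - 1))) u := by
  have hs : 0 < √(u - 1) := sqrt_pos.mpr (by linarith)
  have hu0 : u ≠ 0 := by positivity
  have hsum : HasDerivAt
      (fun v => √(v - 1) * ∑ l ∈ range t, Gamma ((l : ℝ) + 1) / Gamma (3 / 2 + l) / v ^ (l + 1))
      ((gammaHalfRatio t / u ^ (t + 1) - gammaHalfRatio 0 / u ^ 1) / √(u - 1)) u := by
    simp_rw [mul_sum]
    refine (HasDerivAt.fun_sum fun l _ => hasDerivAt_sqrt_sub_one_mul_Gamma_div_pow l hu).congr_deriv ?_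
    rw [← sum_div]
    congr 1
    exact sum_range_sub (fun l => gammaHalfRatio l / u ^ (l + 1)) t
  refine (hsum.add ((hasDerivAt_arctan_sqrt_sub_one hu).const_mul (2 / √π))).congr_deriv ?_
  rw [gammaHalfRatio_zero]
  field_simp
  ring

theorem stmt_4_general (c : ℝ) (hc : 0 < c) (t : ℕ) :
    ∀ z ∈ Set.Ioi (1 / c),
      HasDerivAt
        (fun w : ℝ =>
          c ^ t * (Real.Gamma ((t : ℝ) + 1 / 2) / Real.Gamma ((t : ℝ) + 1)) *
            (Real.sqrt (c * w - 1) *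
                (∑ l ∈ Finset.range t,
                  Real.Gamma ((l : ℝ) + 1) / Real.Gamma (3 / 2 + l) / (c * w) ^ (l + 1)) +
              2 / Real.sqrt Real.pi * Real.arctan (Real.sqrt (c * w - 1))))
        (1 / (z ^ (t + 1) * Real.sqrt (c * z - 1))) z := by
  intro z hz
  have hcz : 1 < c * z := by rwa [Set.mem_Ioi, div_lt_iff₀ hc, mul_comm] at hz
  have hs : 0 < √(c * z - 1) := sqrt_pos.mpr (by linarith)
  have hz0 : 0 < z := pos_of_mul_pos_right (by linarith) hc.le
  have hG1 : Gamma ((t : ℝ) + 1) ≠ 0 := (Gamma_pos_of_pos (by positivity)).ne'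
  have hG2 : Gamma ((t : ℝ) + 1 / 2) ≠ 0 := (Gamma_pos_of_pos (by positivity)).ne'
  refine (((hasDerivAt_antiderivPowSqrt t hcz).comp z ((hasDerivAt_id' z).const_mul c)).const_mul
    (c ^ t * (Gamma ((t : ℝ) + 1 / 2) / Gamma ((t : ℝ) + 1)))).congr_deriv ?_
  rw [gammaHalfRatio, mul_pow]
  field_simp
  ring

theorem stmt_4 (c : ℝ) (hc : 0 < c) (t : ℕ) (ht : 1 ≤ t) :
    ∀ z ∈ Set.Ioi (1 / c),
      HasDerivAt
        (fun w : ℝ =>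
          c ^ t * (Real.Gamma ((t : ℝ) + 1 / 2) / Real.Gamma ((t : ℝ) + 1)) *
            (Real.sqrt (c * w - 1) *
                (∑ l ∈ Finset.range t,
                  Real.Gamma ((l : ℝ) + 1) / Real.Gamma (3 / 2 + l) / (c * w) ^ (l + 1)) +
              2 / Real.sqrt Real.pi * Real.arctan (Real.sqrt (c * w - 1))))
        (1 / (z ^ (t + 1) * Real.sqrt (c * z - 1))) z :=
  stmt_4_general c hc t
end

section
/- Let a > b > 0. For τ ∈ (−b, b), the function τ ↦ (1/(a√(a² − b²))) · arctan( (τ/a)·√((a² − b²)/(b² − τ²)) ) is an antiderivative of τ ↦ 1/((a² − τ²)·√(b² − τ²)). -/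
/-!
Write the argument of `arctan` as `k * (t / √(b² - t²))` with `k = √(a² - b²) / a`. Since
`t / √(r - t²)` has derivative `r / (r - t²)^(3/2)`, the chain rule through `arctan` gives
`k b² / ((b² - τ² + k² τ²) √(b² - τ²))`, and `b² - τ² + k² τ² = b² (a² - τ²) / a²` cancels
everything but the integrand.
-/

open Real

theorem hasDerivAt_div_sqrt_sub_sq {r τ : ℝ} (h : τ ^ 2 < r) :
    HasDerivAt (fun t => t / √(r - t ^ 2)) (r / ((r - τ ^ 2) * √(r - τ ^ 2))) τ := by
  have hpos : 0 < r - τ ^ 2 := sub_pos.mpr h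
  have hs : 0 < √(r - τ ^ 2) := sqrt_pos.mpr hpos
  have hsq : √(r - τ ^ 2) ^ 2 = r - τ ^ 2 := sq_sqrt hpos.le
  have hsqrt : HasDerivAt (fun t => √(r - t ^ 2)) (-(2 * τ) / (2 * √(r - τ ^ 2))) τ := by
    simpa using ((hasDerivAt_pow 2 τ).const_sub r).sqrt hpos.ne'
  refine ((hasDerivAt_id τ).div hsqrt hs.ne').congr_deriv ?_
  rw [id_eq, hsq]
  field_simp
  linear_combination hsq

theorem hasDerivAt_arctan_mul_div_sqrt_sub_sq (k : ℝ) {r τ : ℝ} (h : τ ^ 2 < r) :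
    HasDerivAt (fun t => arctan (k * (t / √(r - t ^ 2))))
      (k * r / ((r - τ ^ 2 + k ^ 2 * τ ^ 2) * √(r - τ ^ 2))) τ := by
  have hpos : 0 < r - τ ^ 2 := sub_pos.mpr h
  have hsq : √(r - τ ^ 2) ^ 2 = r - τ ^ 2 := sq_sqrt hpos.le
  refine ((hasDerivAt_div_sqrt_sub_sq h).const_mul k).arctan.congr_deriv ?_
  have hden : 0 < r - τ ^ 2 + k ^ 2 * τ ^ 2 := by positivity
  field_simp
  rw [hsq]

theorem stmt_7_general (a b : ℝ) (hab : b < a) :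
    ∀ τ ∈ Set.Ioo (-b) b,
      HasDerivAt
        (fun t : ℝ =>
          1 / (a * Real.sqrt (a ^ 2 - b ^ 2)) *
            Real.arctan (t / a * Real.sqrt ((a ^ 2 - b ^ 2) / (b ^ 2 - t ^ 2))))
        (1 / ((a ^ 2 - τ ^ 2) * Real.sqrt (b ^ 2 - τ ^ 2))) τ := by
  rintro τ ⟨hτb, hτb'⟩
  have hτ : τ ^ 2 < b ^ 2 := by nlinarith
  have hc : 0 < a ^ 2 - b ^ 2 := by nlinarith
  have ha : a ≠ 0 := by linarith
  set c := √(a ^ 2 - b ^ 2) with hc_def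
  have hc0 : c ≠ 0 := (sqrt_pos.mpr hc).ne'
  have hcc : c ^ 2 = a ^ 2 - b ^ 2 := sq_sqrt hc.le
  have hfun : (fun t => 1 / (a * c) * arctan (t / a * √((a ^ 2 - b ^ 2) / (b ^ 2 - t ^ 2)))) =
      fun t => 1 / (a * c) * arctan (c / a * (t / √(b ^ 2 - t ^ 2))) := by
    ext t
    rw [sqrt_div hc.le, ← hc_def]
    ring_nf
  rw [hfun]
  refine ((hasDerivAt_arctan_mul_div_sqrt_sub_sq (c / a) hτ).const_mul _).congr_deriv ?_
  have hden : b ^ 2 - τ ^ 2 + (c / a) ^ 2 * τ ^ 2 = b ^ 2 * (a ^ 2 - τ ^ 2) / a ^ 2 := by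
    rw [div_pow, hcc]
    field_simp
    ring
  have hb : b ≠ 0 := by nlinarith
  rw [hden]
  field_simp

theorem stmt_7 (a b : ℝ) (hab : b < a) (hb : 0 < b) :
    ∀ τ ∈ Set.Ioo (-b) b,
      HasDerivAt
        (fun t : ℝ =>
          1 / (a * Real.sqrt (a ^ 2 - b ^ 2)) *
            Real.arctan (t / a * Real.sqrt ((a ^ 2 - b ^ 2) / (b ^ 2 - t ^ 2))))
        (1 / ((a ^ 2 - τ ^ 2) * Real.sqrt (b ^ 2 - τ ^ 2))) τ :=
  stmt_7_general a b hab
end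

section
/- Let b ∈ (0,1), k ≥ 1, and x ∈ (0, b²). Then J_{0,k}(x) := ∫₀^x (1 − t)^{k−1}/(√t (b² − t)^{k+1/2}) dt = (2√(b²z − 1)/b^{2k}) · ∑_{l=0}^{k−1} binom(k−1, l)(1−b²)^l (b²z − 1)^l/(2l+1), where z = 1/(b² − x). -/
theorem stmt_17 (b : ℝ) (hb0 : 0 < b) (hb1 : b < 1) (k : ℕ) (hk : 1 ≤ k)
    (x : ℝ) (hx : x ∈ Set.Ioo 0 (b ^ 2)) (z : ℝ) (hz : z = 1 / (b ^ 2 - x)) :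
    (∫ t in (0:ℝ)..x,
        (1 - t) ^ (k - 1) / (Real.sqrt t * (b ^ 2 - t) ^ ((k : ℝ) + 1 / 2))) =
      2 * Real.sqrt (b ^ 2 * z - 1) / b ^ (2 * k) *
        ∑ l ∈ Finset.range k,
          ((k - 1).choose l : ℝ) * (1 - b ^ 2) ^ l * (b ^ 2 * z - 1) ^ l / (2 * l + 1) := by
  obtain ⟨m, rfl⟩ : ∃ m, k = m + 1 := ⟨k - 1, (Nat.succ_pred_eq_of_pos hk).symm⟩
  obtain ⟨hx0, hxa⟩ := hx
  simp only [Nat.add_sub_cancel]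
  set a : ℝ := b ^ 2 with ha
  have ha0 : (0:ℝ) < a := by positivity
  have ha1 : a < 1 := by nlinarith
  have hax : 0 < a - x := by linarith
  set g : ℝ → ℝ := fun t => t / (a - t) with hgdef
  set f : ℝ → ℝ := fun t =>
    (1 - t) ^ m / (Real.sqrt t * (a - t) ^ ((m + 1 : ℕ) + 1 / 2 : ℝ)) with hfdef
  set F : ℝ → ℝ := fun t => 2 / b ^ (2 * (m + 1)) *
    ∑ l ∈ Finset.range (m + 1),
      (m.choose l : ℝ) * (1 - a) ^ l * Real.sqrt (g t) ^ (2 * l + 1) / (2 * l + 1)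
    with hFdef
  have hb2k : b ^ (2 * (m + 1)) = a ^ (m + 1) := by rw [ha, ← pow_mul, mul_comm]
  -- continuity of F on [0, x]
  have hgc : ContinuousOn g (Set.Icc 0 x) := by
    apply ContinuousOn.div continuousOn_id (by fun_prop)
    intro t ht
    have := ht.2
    intro h
    simp only [sub_eq_zero] at h
    linarith [ht.2]
  have hFc : ContinuousOn F (Set.Icc 0 x) := by
    apply ContinuousOn.mul continuousOn_const
    apply continuousOn_finset_sum
    intro l _
    apply ContinuousOn.div_const
    apply ContinuousOn.mul continuousOn_const
    exact (Real.continuous_sqrt.comp_continuousOn hgc).pow _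
  -- derivative on (0, x)
  have hderiv : ∀ t ∈ Set.Ioo 0 x, HasDerivAt F (f t) t := by
    intro t ht
    obtain ⟨ht0, htx⟩ := ht
    have hat : 0 < a - t := by linarith
    have ht1 : t < 1 := by linarith
    have hgt0 : 0 < g t := div_pos ht0 hat
    have hg' : HasDerivAt g (a / (a - t) ^ 2) t := by
      have h1 : HasDerivAt (fun s : ℝ => s) 1 t := hasDerivAt_id t
      have h2 : HasDerivAt (fun s : ℝ => a - s) (-1) t := by
        simpa using (hasDerivAt_const t a).fun_sub (hasDerivAt_id t)
      have := h1.fun_div h2 (ne_of_gt hat)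
      refine this.congr_deriv ?_
      ring
    have hs : HasDerivAt (fun s => Real.sqrt (g s))
        (1 / (2 * Real.sqrt (g t)) * (a / (a - t) ^ 2)) t :=
      (Real.hasDerivAt_sqrt (ne_of_gt hgt0)).comp t hg'
    have hterm : ∀ l : ℕ, HasDerivAt
        (fun s => (m.choose l : ℝ) * (1 - a) ^ l * Real.sqrt (g s) ^ (2 * l + 1) / (2 * l + 1))
        ((m.choose l : ℝ) * (1 - a) ^ l *
          ((2 * l + 1 : ℕ) * Real.sqrt (g t) ^ (2 * l) *
            (1 / (2 * Real.sqrt (g t)) * (a / (a - t) ^ 2))) / (2 * l + 1)) t := by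
      intro l
      have := (hs.fun_pow (2 * l + 1)).const_mul ((m.choose l : ℝ) * (1 - a) ^ l)
      have h2 := this.div_const (2 * l + 1 : ℝ)
      refine h2.congr_deriv ?_
      simp
    have hsum := (HasDerivAt.fun_sum (fun l (_ : l ∈ Finset.range (m + 1)) => hterm l)).const_mul
      (2 / b ^ (2 * (m + 1)))
    have heq : (2 / b ^ (2 * (m + 1))) * ∑ l ∈ Finset.range (m + 1),
        ((m.choose l : ℝ) * (1 - a) ^ l *
          ((2 * l + 1 : ℕ) * Real.sqrt (g t) ^ (2 * l) *
            (1 / (2 * Real.sqrt (g t)) * (a / (a - t) ^ 2))) / (2 * l + 1)) = f t := by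
      have hsq : Real.sqrt (g t) ^ 2 = g t := Real.sq_sqrt hgt0.le
      have hsne : Real.sqrt (g t) ≠ 0 := ne_of_gt (Real.sqrt_pos.mpr hgt0)
      have step1 : ∀ l ∈ Finset.range (m + 1),
          (m.choose l : ℝ) * (1 - a) ^ l *
            ((2 * l + 1 : ℕ) * Real.sqrt (g t) ^ (2 * l) *
              (1 / (2 * Real.sqrt (g t)) * (a / (a - t) ^ 2))) / (2 * l + 1)
          = ((1 - a) * g t) ^ l * (m.choose l : ℝ) *
              (a / (2 * Real.sqrt (g t) * (a - t) ^ 2)) := by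
        intro l _
        have h2l : Real.sqrt (g t) ^ (2 * l) = g t ^ l := by
          rw [pow_mul, hsq]
        rw [h2l, mul_pow]
        have hne : (2 * (l : ℝ) + 1) ≠ 0 := by positivity
        push_cast
        field_simp
      rw [Finset.sum_congr rfl step1, ← Finset.sum_mul]
      have hbin : ∑ l ∈ Finset.range (m + 1), ((1 - a) * g t) ^ l * (m.choose l : ℝ)
          = (1 + (1 - a) * g t) ^ m := by
        rw [add_comm (1 : ℝ), add_pow]
        exact Finset.sum_congr rfl (fun l _ => by rw [one_pow, mul_one])
      rw [hbin]
      have hval : 1 + (1 - a) * g t = a * (1 - t) / (a - t) := by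
        rw [hgdef]
        field_simp
        ring
      rw [hval, div_pow, mul_pow]
      have hsgt : Real.sqrt (g t) = Real.sqrt t / Real.sqrt (a - t) := by
        rw [hgdef]
        exact Real.sqrt_div ht0.le _
      have hrpow : (a - t) ^ ((m + 1 : ℕ) + 1 / 2 : ℝ)
          = (a - t) ^ (m + 1) * Real.sqrt (a - t) := by
        rw [Real.rpow_add hat, Real.rpow_natCast, Real.sqrt_eq_rpow]
      rw [hfdef]
      simp only [hrpow, hsgt]
      rw [hb2k]
      have hstne : Real.sqrt t ≠ 0 := ne_of_gt (Real.sqrt_pos.mpr ht0)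
      have hsate : Real.sqrt (a - t) ≠ 0 := ne_of_gt (Real.sqrt_pos.mpr hat)
      have hsq2 : Real.sqrt (a - t) ^ 2 = a - t := Real.sq_sqrt hat.le
      have hane : (a : ℝ) ≠ 0 := ne_of_gt ha0
      have hatne : a - t ≠ 0 := ne_of_gt hat
      rw [pow_succ a m, pow_succ (a - t) m]
      field_simp
      rw [hsq2]
    rw [← heq]
    exact hsum
  -- integrability
  have hint : IntervalIntegrable f MeasureTheory.volume 0 x := by
    have hC : (0:ℝ) < (a - x) ^ ((m + 1 : ℕ) + 1 / 2 : ℝ) := Real.rpow_pos_of_pos hax _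
    apply IntervalIntegrable.mono_fun
      (((intervalIntegral.intervalIntegrable_rpow'
        (by norm_num : (-1:ℝ) < -(1/2))).const_mul (((a - x) ^ ((m + 1 : ℕ) + 1 / 2 : ℝ))⁻¹)))
    · apply Measurable.aestronglyMeasurable
      rw [hfdef]
      fun_prop
    · rw [Set.uIoc_of_le hx0.le]
      filter_upwards [MeasureTheory.ae_restrict_mem measurableSet_Ioc] with t ht
      obtain ⟨ht0, htx⟩ := ht
      have hat : 0 < a - t := by linarith
      have ht1 : t < 1 := by linarith
      have hst : 0 < Real.sqrt t := Real.sqrt_pos.mpr ht0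
      have hrp : 0 < (a - t) ^ ((m + 1 : ℕ) + 1 / 2 : ℝ) := Real.rpow_pos_of_pos hat _
      rw [Real.norm_eq_abs, Real.norm_eq_abs]
      have hfnn : 0 ≤ f t := by
        rw [hfdef]
        exact div_nonneg (pow_nonneg (by linarith) m) (by positivity)
      rw [abs_of_nonneg hfnn, abs_of_nonneg (by positivity)]
      have hb1' : (1 - t) ^ m ≤ 1 := pow_le_one₀ (by linarith) (by linarith)
      have hb2' : (a - x) ^ ((m + 1 : ℕ) + 1 / 2 : ℝ) ≤ (a - t) ^ ((m + 1 : ℕ) + 1 / 2 : ℝ) :=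
        Real.rpow_le_rpow hax.le (by linarith) (by positivity)
      have key : f t ≤ 1 / (Real.sqrt t * (a - x) ^ ((m + 1 : ℕ) + 1 / 2 : ℝ)) := by
        rw [hfdef]
        apply div_le_div₀ (by positivity) hb1' (by positivity)
        exact mul_le_mul_of_nonneg_left hb2' hst.le
      calc f t ≤ 1 / (Real.sqrt t * (a - x) ^ ((m + 1 : ℕ) + 1 / 2 : ℝ)) := key
        _ = ((a - x) ^ ((m + 1 : ℕ) + 1 / 2 : ℝ))⁻¹ * t ^ (-(1/2) : ℝ) := by
            rw [Real.rpow_neg ht0.le, ← Real.sqrt_eq_rpow]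
            field_simp
  -- apply FTC
  have hFTC := intervalIntegral.integral_eq_sub_of_hasDeriv_right_of_le hx0.le hFc
    (fun t ht => (hderiv t ht).hasDerivWithinAt) hint
  have hF0 : F 0 = 0 := by
    rw [hFdef]
    simp [hgdef]
  have hgx : b ^ 2 * z - 1 = g x := by
    rw [hz, hgdef, ← ha]
    field_simp
    ring
  rw [hFTC, hF0, sub_zero, hgx]
  simp only [hFdef]
  rw [Finset.mul_sum, Finset.mul_sum]
  apply Finset.sum_congr rfl
  intro l _
  have hgx0 : 0 ≤ g x := by
    rw [hgdef]
    positivity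
  have hpow : Real.sqrt (g x) ^ (2 * l + 1) = g x ^ l * Real.sqrt (g x) := by
    rw [pow_succ, pow_mul, Real.sq_sqrt hgx0]
  rw [hpow]
  ring
end

section
/- Let a > 1 > b > 0, β ∈ ℕ, k ≥ 1, and consider J_{β,k}(x) = ∫₀^x (1−t)^{k−1}(a²−t)^β/(√t (b²−t)^{k+1/2}) dt for x ∈ (0, b²). Then [1 + 2β + (2(k−1)b² + 2k + 1)/(b² − 1)]·J_{β,k}(x) = 2√x·(1−x)^{k−1}(a²−x)^β/(b²−x)^{k+1/2} + 2((k−1)/(b²−1))·J_{β,k−1}(x) + 2a²β·J_{β−1,k}(x) + (2k+1)·(b²/(b²−1))·J_{β,k+1}(x). -/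
/-!
Differentiate the boundary term `G t = 2 √t (1 - t)^(k-1) (a² - t)^β / (b² - t)^(k+1/2)`: the
logarithmic derivative `1/(2t) - (k-1)/(1-t) - β/(a²-t) + (k+1/2)/(b²-t)`, rewritten by partial
fractions over the denominators of the four integrands, shows that `G'` is exactly the linear
combination of the integrands of `J_{β,k}`, `J_{β,k-1}`, `J_{β-1,k}` and `J_{β,k+1}` appearing in
the recurrence. Integrating over `[0, x]` (the singularity at `0` is the integrable `t^(-1/2)`, and
`G 0 = 0`) gives the identity.
-/

open Real MeasureTheory Set intervalIntegral

lemma intervalIntegrable_inv_sqrt {x : ℝ} (hx : 0 ≤ x) :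
    IntervalIntegrable (fun t => (√t)⁻¹) volume 0 x := by
  have h := intervalIntegrable_rpow' (a := 0) (b := x) (r := -(1 / 2)) (by norm_num)
  rw [intervalIntegrable_iff_integrableOn_Ioc_of_le hx] at h ⊢
  refine h.congr_fun (fun t ht => ?_) measurableSet_Ioc
  simp only [rpow_neg ht.1.le, ← sqrt_eq_rpow]

lemma IntervalIntegrable.div_sqrt {f : ℝ → ℝ} {x : ℝ} (hx : 0 ≤ x)
    (hf : ContinuousOn f (Icc 0 x)) :
    IntervalIntegrable (fun t => f t / √t) volume 0 x := by
  simp_rw [div_eq_mul_inv]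
  exact (intervalIntegrable_inv_sqrt hx).continuousOn_mul (by rwa [uIcc_of_le hx])

lemma integral_eq_of_hasDerivAt_lincomb {G φ₀ φ₁ φ₂ φ₃ : ℝ → ℝ} {c₀ c₁ c₂ c₃ a b : ℝ}
    (hab : a ≤ b) (hG : ContinuousOn G (Icc a b))
    (hderiv : ∀ t ∈ Ioo a b, HasDerivAt G (c₀ * φ₀ t - c₁ * φ₁ t - c₂ * φ₂ t - c₃ * φ₃ t) t)
    (h₀ : IntervalIntegrable φ₀ volume a b) (h₁ : IntervalIntegrable φ₁ volume a b)
    (h₂ : IntervalIntegrable φ₂ volume a b) (h₃ : IntervalIntegrable φ₃ volume a b) :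
    c₀ * ∫ t in a..b, φ₀ t = G b - G a + c₁ * (∫ t in a..b, φ₁ t) + c₂ * (∫ t in a..b, φ₂ t) +
      c₃ * ∫ t in a..b, φ₃ t := by
  have h₀₁ := (h₀.const_mul c₀).sub (h₁.const_mul c₁)
  have h₀₁₂ := h₀₁.sub (h₂.const_mul c₂)
  have hFTC := integral_eq_sub_of_hasDeriv_right_of_le hab hG
    (fun t ht => (hderiv t ht).hasDerivWithinAt) (h₀₁₂.sub (h₃.const_mul c₃))
  rw [integral_sub h₀₁₂ (h₃.const_mul c₃), integral_sub h₀₁ (h₂.const_mul c₂),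
    integral_sub (h₀.const_mul c₀) (h₁.const_mul c₁)] at hFTC
  simp only [intervalIntegral.integral_const_mul] at hFTC
  linarith

lemma continuousOn_weight (a b B C x : ℝ) (m : ℕ) (hxa : x < a ^ 2) (hxb : x < b ^ 2) :
    ContinuousOn (fun t => (1 - t) ^ m * (a ^ 2 - t) ^ B / (b ^ 2 - t) ^ C) (Iic x) := by
  have hpos : ∀ c : ℝ, x < c → ∀ t ∈ Iic x, 0 < c - t := fun c hc t ht => by
    linarith [mem_Iic.1 ht]
  have hsub : ∀ c : ℝ, ContinuousOn (fun t : ℝ => c - t) (Iic x) := fun c => by fun_prop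
  refine (((hsub 1).pow m).mul ((hsub _).rpow_const fun t ht => Or.inl (hpos _ hxa t ht).ne')).div
    ((hsub _).rpow_const fun t ht => Or.inl (hpos _ hxb t ht).ne')
    fun t ht => (rpow_pos_of_pos (hpos _ hxb t ht) _).ne'

lemma intervalIntegrable_integrand (a b B C x : ℝ) (m : ℕ) (hx : 0 ≤ x) (hxa : x < a ^ 2)
    (hxb : x < b ^ 2) :
    IntervalIntegrable (fun t => (1 - t) ^ m * (a ^ 2 - t) ^ B / (√t * (b ^ 2 - t) ^ C))
      volume 0 x := by
  convert IntervalIntegrable.div_sqrt hx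
    ((continuousOn_weight a b B C x m hxa hxb).mono Icc_subset_Iic_self) using 2 with t
  rw [mul_comm √t, div_div]

lemma continuousOn_boundaryTerm (a b B C x : ℝ) (m : ℕ) (hxa : x < a ^ 2) (hxb : x < b ^ 2) :
    ContinuousOn (fun t => 2 * √t * (1 - t) ^ m * (a ^ 2 - t) ^ B / (b ^ 2 - t) ^ C) (Iic x) := by
  have h : ContinuousOn (fun t => 2 * √t) (Iic x) := by fun_prop
  exact (h.mul (continuousOn_weight a b B C x m hxa hxb)).congr fun t _ => by
    simp only [Pi.mul_apply]; ring

lemma hasDerivAt_boundaryTerm {a b B t : ℝ} {k : ℕ} (hk : 1 ≤ k) (hb : b ^ 2 ≠ 1) (ht : 0 < t)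
    (hta : t < a ^ 2) (htb : t < b ^ 2) :
    HasDerivAt
      (fun y => 2 * √y * (1 - y) ^ (k - 1) * (a ^ 2 - y) ^ B / (b ^ 2 - y) ^ ((k : ℝ) + 1 / 2))
      ((1 + 2 * B + (2 * ((k : ℝ) - 1) * b ^ 2 + 2 * k + 1) / (b ^ 2 - 1)) *
          ((1 - t) ^ (k - 1) * (a ^ 2 - t) ^ B / (√t * (b ^ 2 - t) ^ ((k : ℝ) + 1 / 2)))
        - 2 * (((k : ℝ) - 1) / (b ^ 2 - 1)) *
          ((1 - t) ^ (k - 1 - 1) * (a ^ 2 - t) ^ B /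
            (√t * (b ^ 2 - t) ^ (((k : ℝ) - 1) + 1 / 2)))
        - 2 * a ^ 2 * B *
          ((1 - t) ^ (k - 1) * (a ^ 2 - t) ^ (B - 1) / (√t * (b ^ 2 - t) ^ ((k : ℝ) + 1 / 2)))
        - (2 * (k : ℝ) + 1) * (b ^ 2 / (b ^ 2 - 1)) *
          ((1 - t) ^ k * (a ^ 2 - t) ^ B / (√t * (b ^ 2 - t) ^ (((k : ℝ) + 1) + 1 / 2)))) t := by
  have hv : 0 < a ^ 2 - t := by linarith
  have hw : 0 < b ^ 2 - t := by linarith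
  have hs : HasDerivAt sqrt (1 / (2 * √t)) t := hasDerivAt_sqrt ht.ne'
  have hU : HasDerivAt (fun y : ℝ => (1 - y) ^ (k - 1))
      (((k - 1 : ℕ) : ℝ) * (1 - t) ^ (k - 1 - 1) * (-1)) t := by
    simpa using ((hasDerivAt_id t).const_sub 1).fun_pow (k - 1)
  have hV : HasDerivAt (fun y : ℝ => (a ^ 2 - y) ^ B) (-1 * B * (a ^ 2 - t) ^ (B - 1)) t := by
    simpa using ((hasDerivAt_id t).const_sub (a ^ 2)).rpow_const (p := B) (Or.inl hv.ne')
  have hW : HasDerivAt (fun y : ℝ => (b ^ 2 - y) ^ ((k : ℝ) + 1 / 2))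
      (-1 * ((k : ℝ) + 1 / 2) * (b ^ 2 - t) ^ ((k : ℝ) + 1 / 2 - 1)) t := by
    simpa using ((hasDerivAt_id t).const_sub (b ^ 2)).rpow_const
      (p := (k : ℝ) + 1 / 2) (Or.inl hw.ne')
  refine ((((hs.const_mul 2).mul hU).mul hV).div hW (rpow_pos_of_pos hw _).ne').congr_deriv ?_
  set Q := (b ^ 2 - t) ^ ((k : ℝ) - 1 + 1 / 2) with hQ
  have hQ₀ : (b ^ 2 - t) ^ ((k : ℝ) + 1 / 2 - 1) = Q := by congr 1; ring
  have hQ₁ : (b ^ 2 - t) ^ ((k : ℝ) + 1 / 2) = Q * (b ^ 2 - t) := by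
    rw [hQ, ← rpow_add_one hw.ne']; congr 1; ring
  have hQ₂ : (b ^ 2 - t) ^ ((k : ℝ) + 1 + 1 / 2) = Q * (b ^ 2 - t) * (b ^ 2 - t) := by
    rw [hQ, ← rpow_add_one hw.ne', ← rpow_add_one hw.ne']; congr 1; ring
  have hP : (a ^ 2 - t) ^ (B - 1) = (a ^ 2 - t) ^ B / (a ^ 2 - t) := by
    rw [rpow_sub hv, rpow_one]
  have hQpos : 0 < Q := rpow_pos_of_pos hw _
  rw [hQ₀, hQ₁, hQ₂, hP]
  clear_value Q
  have hs₀ : 0 < √t := sqrt_pos.2 ht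
  have hst : √t ^ 2 = t := sq_sqrt ht.le
  have hb' : b ^ 2 - 1 ≠ 0 := sub_ne_zero.2 hb
  simp only [Pi.mul_apply]
  set s := √t
  rw [← hst] at hv hw ⊢
  obtain ⟨n, rfl⟩ := Nat.exists_eq_add_of_le' hk
  -- `k - 1 - 1` truncates at `k = 1`, where its coefficient `k - 1` vanishes
  rcases n with _ | n <;>
    simp only [Nat.add_sub_cancel, zero_tsub, pow_succ, pow_zero, Nat.cast_add, Nat.cast_one,
      Nat.cast_zero] <;>
    field_simp <;> ring
theorem stmt_18 (a b : ℝ) (ha : 1 < a) (hb0 : 0 < b) (hb1 : b < 1) (β k : ℕ) (hk : 1 ≤ k)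
    (x : ℝ) (hx : x ∈ Set.Ioo 0 (b ^ 2)) :
    (1 + 2 * (β : ℝ) + (2 * ((k : ℝ) - 1) * b ^ 2 + 2 * k + 1) / (b ^ 2 - 1)) *
        (∫ t in (0:ℝ)..x,
          (1 - t) ^ (k - 1) * (a ^ 2 - t) ^ (β : ℝ) /
            (Real.sqrt t * (b ^ 2 - t) ^ ((k : ℝ) + 1 / 2))) =
      2 * Real.sqrt x * (1 - x) ^ (k - 1) * (a ^ 2 - x) ^ (β : ℝ) /
          (b ^ 2 - x) ^ ((k : ℝ) + 1 / 2) +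
        2 * (((k : ℝ) - 1) / (b ^ 2 - 1)) *
          (∫ t in (0:ℝ)..x,
            (1 - t) ^ (k - 1 - 1) * (a ^ 2 - t) ^ (β : ℝ) /
              (Real.sqrt t * (b ^ 2 - t) ^ (((k : ℝ) - 1) + 1 / 2))) +
        2 * a ^ 2 * (β : ℝ) *
          (∫ t in (0:ℝ)..x,
            (1 - t) ^ (k - 1) * (a ^ 2 - t) ^ ((β : ℝ) - 1) /
              (Real.sqrt t * (b ^ 2 - t) ^ ((k : ℝ) + 1 / 2))) +
        (2 * (k : ℝ) + 1) * (b ^ 2 / (b ^ 2 - 1)) *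
          (∫ t in (0:ℝ)..x,
            (1 - t) ^ k * (a ^ 2 - t) ^ (β : ℝ) /
              (Real.sqrt t * (b ^ 2 - t) ^ (((k : ℝ) + 1) + 1 / 2))) := by
  obtain ⟨hx0, hxb⟩ := hx
  have hxa : x < a ^ 2 := by nlinarith
  have hb : b ^ 2 ≠ 1 := by nlinarith
  have hint (m : ℕ) (B C : ℝ) := intervalIntegrable_integrand a b B C x m hx0.le hxa hxb
  have key := integral_eq_of_hasDerivAt_lincomb hx0.le
    ((continuousOn_boundaryTerm a b β (k + 1 / 2) x (k - 1) hxa hxb).mono Icc_subset_Iic_self)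
    (fun t ht => hasDerivAt_boundaryTerm hk hb ht.1 (ht.2.trans hxa) (ht.2.trans hxb))
    (hint _ _ _) (hint _ _ _) (hint _ _ _) (hint _ _ _)
  simpa only [sqrt_zero, mul_zero, zero_mul, zero_div, sub_zero] using key
end
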